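/- Let K be a kernel on ℝ^d × ℝ^d with ‖r_K‖_{L¹} < ∞, and let A_n = (a_n(λ,λ'))_{λ,λ'∈2^{−n}ℤ^d} be its discretization matrices. Then for every n ∈ ℤ and all λ,λ' ∈ 2^{−n}ℤ^d: |a_n(λ,λ')| ≤ 2^{nd} ∫_{|t| ≤ 3·2^{−n}} r_K(t) dt if |λ−λ'| ≤ 2^{−n+1}, and |a_n(λ,λ')| ≤ r_K((λ−λ')/2) if |λ−λ'| > 2^{−n+1}. -/

import Mathlib

open MeasureTheory Real ENNReal Set Function

noncomputable section

/-- An axis-parallel cube in `ℝ^d` (with the sup norm `|x| = max |x_i|`):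
the closed ball of center `c` and radius `r` (side length `2r`). -/
def Cube {d : ℕ} (c : Fin d → ℝ) (r : ℝ) : Set (Fin d → ℝ) := Metric.closedBall c r

/-- The average `(1/|Q|) ∫_Q f` of `f` over the cube of center `c`, radius `r`. -/
def cubeAvg {d : ℕ} (c : Fin d → ℝ) (r : ℝ) (f : (Fin d → ℝ) → ℝ) : ℝ :=
  (∫ x in Cube c r, f x) / (volume (Cube c r)).toReal

/-- The Muckenhoupt `A_p` condition, with constant `A`, for a weight `w` on `ℝ^d`. -/
def ApBoundWith {d : ℕ} (p : ℝ) (w : (Fin d → ℝ) → ℝ) (A : ℝ) : Prop :=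
  if p = 1 then
    ∀ (c : Fin d → ℝ) (r : ℝ), 0 < r →
      cubeAvg c r w ≤ A * essInf w (volume.restrict (Cube c r))
  else
    ∀ (c : Fin d → ℝ) (r : ℝ), 0 < r →
      cubeAvg c r w * (cubeAvg c r fun x => w x ^ (-1 / (p - 1))) ^ (p - 1) ≤ A

/-- `w` is a Muckenhoupt `A_p` weight. -/
def IsApWeight {d : ℕ} (p : ℝ) (w : (Fin d → ℝ) → ℝ) : Prop :=
  (∀ x, 0 < w x) ∧ LocallyIntegrable w volume ∧ ∃ A, ApBoundWith p w A

/-- The `A_p` bound `A_p(w)`: the smallest constant in the `A_p` condition. -/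
def apBound {d : ℕ} (p : ℝ) (w : (Fin d → ℝ) → ℝ) : ℝ :=
  sInf {A | ApBoundWith p w A}

/-- The weighted norm `‖f‖_{p,w} = (∫ |f|^p w)^{1/p}`. -/
def wNorm {d : ℕ} (p : ℝ) (w : (Fin d → ℝ) → ℝ) (f : (Fin d → ℝ) → ℂ) : ℝ≥0∞ :=
  (∫⁻ x, (‖f x‖₊ : ℝ≥0∞) ^ p * ENNReal.ofReal (w x)) ^ (1 / p)

/-- Membership in the weighted Lebesgue space `L^p_w`. -/
def MemLpw {d : ℕ} (p : ℝ) (w : (Fin d → ℝ) → ℝ) (f : (Fin d → ℝ) → ℂ) : Prop :=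
  AEMeasurable f volume ∧ wNorm p w f < ⊤

/-- Stability of an operator `S` on `L^p_w`:
`‖S f‖_{p,w} ≥ C ‖f‖_{p,w}` for some `C > 0` and all `f ∈ L^p_w`. -/
def HasStability {d : ℕ} (p : ℝ) (w : (Fin d → ℝ) → ℝ)
    (S : ((Fin d → ℝ) → ℂ) → ((Fin d → ℝ) → ℂ)) : Prop :=
  ∃ C : ℝ, 0 < C ∧ ∀ f, MemLpw p w f → ENNReal.ofReal C * wNorm p w f ≤ wNorm p w (S f)

/-- The integral operator `T f (x) = ∫ K(x,y) f(y) dy`. -/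
def intOp {d : ℕ} (K : (Fin d → ℝ) → (Fin d → ℝ) → ℂ) (f : (Fin d → ℝ) → ℂ)
    (x : Fin d → ℝ) : ℂ :=
  ∫ y, K x y * f y

/-- The minimal radially decreasing function dominating the off-diagonal decay of an
`ℝ≥0∞`-valued kernel: `r_F(x) = sup_{|y - y'| ≥ |x|} F(y,y')`. -/
def radDom {d : ℕ} (F : (Fin d → ℝ) → (Fin d → ℝ) → ℝ≥0∞) (x : Fin d → ℝ) : ℝ≥0∞ :=
  ⨆ (y : Fin d → ℝ) (y' : Fin d → ℝ) (_ : ‖x‖ ≤ ‖y - y'‖), F y y'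

/-- `r_K(x) = sup_{|y-y'| ≥ |x|} |K(y,y')|`. -/
def rK {d : ℕ} (K : (Fin d → ℝ) → (Fin d → ℝ) → ℂ) : (Fin d → ℝ) → ℝ≥0∞ :=
  radDom fun y y' => (‖K y y'‖₊ : ℝ≥0∞)

/-- The modified modulus of continuity `ω_δ(K)`. -/
def omegaMod {d : ℕ} (K : (Fin d → ℝ) → (Fin d → ℝ) → ℂ) (δ : ℝ)
    (x y : Fin d → ℝ) : ℝ≥0∞ :=
  if 4 * δ ≤ ‖x - y‖ then
    ⨆ (x' : Fin d → ℝ) (y' : Fin d → ℝ) (_ : ‖x' - x‖ ≤ δ ∧ ‖y' - y‖ ≤ δ),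
      (‖K x' y' - K x y‖₊ : ℝ≥0∞)
  else 0

/-- The localization quantity
`D₀ = ‖r_K‖₁ + sup_{0<δ≤1} δ^{-α} ‖r_K χ_{|·|≤δ}‖₁ + sup_{0<δ≤1} δ^{-α} ‖r_{ω_δ(K)}‖₁`. -/
def D0 {d : ℕ} (α : ℝ) (K : (Fin d → ℝ) → (Fin d → ℝ) → ℂ) : ℝ≥0∞ :=
  (∫⁻ x, rK K x) +
    (⨆ δ ∈ Set.Ioc (0:ℝ) 1,
      ENNReal.ofReal (δ ^ (-α)) * ∫⁻ x in {x : Fin d → ℝ | ‖x‖ ≤ δ}, rK K x) +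
    (⨆ δ ∈ Set.Ioc (0:ℝ) 1,
      ENNReal.ofReal (δ ^ (-α)) * ∫⁻ x, radDom (omegaMod K δ) x)

/-- The index of the level-`n` dyadic cell containing `x`:
`x ∈ 2^{-n}(k + [-1/2,1/2)^d)` iff `haarIdx n x = k`. -/
def haarIdx {d : ℕ} (n : ℤ) (x : Fin d → ℝ) : Fin d → ℤ :=
  fun i => ⌊(2:ℝ) ^ n * x i + 1 / 2⌋

/-- The level-`n` dyadic cell `2^{-n}(k + [-1/2,1/2)^d)`. -/
def haarCell {d : ℕ} (n : ℤ) (k : Fin d → ℤ) : Set (Fin d → ℝ) :=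
  {x | haarIdx n x = k}

/-- Haar scaling function `φ_{n,k}(x) = 2^{nd/2} χ_{[-1/2,1/2)^d}(2^n x - k)`. -/
def haarPhi {d : ℕ} (n : ℤ) (k : Fin d → ℤ) (x : Fin d → ℝ) : ℝ :=
  if haarIdx n x = k then (2:ℝ) ^ (((n : ℝ) * (d : ℝ)) / 2) else 0

/-- The Haar projection `P_n f = Σ_λ ⟨f, φ_{n,2^nλ}⟩ φ_{n,2^nλ}`, i.e. the conditional
expectation on level-`n` dyadic cells. -/
def haarProj {d : ℕ} (n : ℤ) (f : (Fin d → ℝ) → ℂ) (x : Fin d → ℝ) : ℂ :=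
  ((2:ℝ) ^ (n * (d:ℤ)) : ℝ) • ∫ y in haarCell n (haarIdx n x), f y

/-- Entries of the discretization matrix:
`a_n(λ,λ') = 2^{nd} ∫∫ φ_{n,2^nλ}(x) K(x,y) φ_{n,2^nλ'}(y) dy dx`, `λ = 2^{-n} k`. -/
def aMat {d : ℕ} (K : (Fin d → ℝ) → (Fin d → ℝ) → ℂ) (n : ℤ) (k k' : Fin d → ℤ) : ℂ :=
  ((2:ℝ) ^ (n * (d:ℤ)) : ℝ) •
    ∫ x, ∫ y, (haarPhi n k x : ℂ) * K x y * (haarPhi n k' y : ℂ)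

/-- Action of the discretization matrix `A_n` on a sequence. -/
def matApply {d : ℕ} (K : (Fin d → ℝ) → (Fin d → ℝ) → ℂ) (n : ℤ)
    (c : (Fin d → ℤ) → ℂ) (k : Fin d → ℤ) : ℂ :=
  ∑' k' : Fin d → ℤ, aMat K n k k' * c k'

/-- The discretization of the weight `w` at level `n`:
`w_n(λ) = 2^{nd} ∫_{λ + 2^{-n}[-1/2,1/2)^d} w`, `λ = 2^{-n} k`. -/
def wDisc {d : ℕ} (w : (Fin d → ℝ) → ℝ) (n : ℤ) (k : Fin d → ℤ) : ℝ :=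
  ((2:ℝ) ^ (n * (d:ℤ))) * ∫ x in haarCell n k, w x

/-- The weighted sequence norm `‖c‖_{p,v} = (Σ_λ |c(λ)|^p v(λ))^{1/p}`. -/
def dNorm {d : ℕ} (p : ℝ) (v : (Fin d → ℤ) → ℝ) (c : (Fin d → ℤ) → ℂ) : ℝ≥0∞ :=
  (∑' k, (‖c k‖₊ : ℝ≥0∞) ^ p * ENNReal.ofReal (v k)) ^ (1 / p)

/-- The point `λ = 2^{-n} k ∈ 2^{-n} ℤ^d`. -/
def lamOf {d : ℕ} (n : ℤ) (k : Fin d → ℤ) : Fin d → ℝ :=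
  fun i => (2:ℝ) ^ (-n) * (k i : ℝ)

/-- `ψ₀(x) = max(min(2 - |x|, 1), 0)`. -/
def psi0 {d : ℕ} (x : Fin d → ℝ) : ℝ := max (min (2 - ‖x‖) 1) 0

/-- The diagonal entry `ψ₀((λ - k)/N)` of the localization matrix `Ψ_k^N` with
`k = N m ∈ N ℤ^d`, at `λ = 2^{-n} j`. -/
def locW {d : ℕ} (n : ℤ) (N : ℕ) (m : Fin d → ℤ) (j : Fin d → ℤ) : ℝ :=
  psi0 fun i => (lamOf n j i - (N : ℝ) * (m i : ℝ)) / (N : ℝ)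

/-- The discrete box `a + [0, N-1]^d` in `ℤ^d`. -/
def discBox {d : ℕ} (a : Fin d → ℤ) (N : ℕ) : Finset (Fin d → ℤ) :=
  Finset.Icc a fun i => a i + N - 1

/-- The discrete Muckenhoupt `A_p` condition with constant `A`. -/
def DiscApBoundWith {d : ℕ} (p : ℝ) (v : (Fin d → ℤ) → ℝ) (A : ℝ) : Prop :=
  if p = 1 then
    ∀ (a : Fin d → ℤ) (N : ℕ), 0 < N → ∀ k0 ∈ discBox a N,
      (N:ℝ) ^ (-(d:ℤ)) * ∑ k ∈ discBox a N, v k ≤ A * v k0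
  else
    ∀ (a : Fin d → ℤ) (N : ℕ), 0 < N →
      ((N:ℝ) ^ (-(d:ℤ)) * ∑ k ∈ discBox a N, v k) *
        ((N:ℝ) ^ (-(d:ℤ)) * ∑ k ∈ discBox a N, v k ^ (-1 / (p - 1))) ^ (p - 1) ≤ A

/-- The discrete `A_p` bound. -/
def discApBound {d : ℕ} (p : ℝ) (v : (Fin d → ℤ) → ℝ) : ℝ :=
  sInf {A | DiscApBoundWith p v A}

/-!
Since `φ_{n,k} = 2^{nd/2} 1_{Q_k}` for the dyadic cell `Q_k` of side `2^{-n}` around `λ = 2^{-n}k`,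
`|a_n(λ,λ')|` is at most `2^{nd}` times the supremum over `x ∈ Q_k` of `∫_{Q_{k'}} |K(x,y)| dy`.
For `x ∈ Q_k`, `y ∈ Q_{k'}` the distance `|x - y|` is within `2^{-n}` of `|λ - λ'|`.
Near the diagonal this puts `x - Q_{k'}` inside `{|t| ≤ 3·2^{-n}}`, and `|K(x,y)| ≤ r_K(x - y)`.
Off the diagonal `|x - y| > |λ - λ'|/2`, so `|K| ≤ r_K((λ - λ')/2)` on all of `Q_k × Q_{k'}`,
a set of measure `2^{-2nd}`.
-/

lemma enorm_le_rK {d : ℕ} (K : (Fin d → ℝ) → (Fin d → ℝ) → ℂ) {t x y : Fin d → ℝ}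
    (h : ‖t‖ ≤ ‖x - y‖) : ‖K x y‖ₑ ≤ rK K t :=
  le_iSup₂_of_le x y (le_iSup_of_le h le_rfl)

lemma setLIntegral_comp_sub_le_of_subset_closedBall {E : Type*} [NormedAddCommGroup E]
    [MeasurableSpace E] [MeasurableAdd E] [MeasurableNeg E] (μ : Measure E)
    [μ.IsAddLeftInvariant] [μ.IsNegInvariant] (f : E → ℝ≥0∞) {s : Set E} {x : E} {R : ℝ}
    (hs : s ⊆ Metric.closedBall x R) :
    ∫⁻ y in s, f (x - y) ∂μ ≤ ∫⁻ t in Metric.closedBall 0 R, f t ∂μ := by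
  have hs' : s ⊆ (x - ·) ⁻¹' Metric.closedBall 0 R := fun y hy => by
    simpa [dist_eq_norm, norm_sub_rev] using hs hy
  calc ∫⁻ y in s, f (x - y) ∂μ ≤ ∫⁻ y in (x - ·) ⁻¹' Metric.closedBall 0 R, f (x - y) ∂μ :=
        lintegral_mono_set hs'
    _ = ∫⁻ t in Metric.closedBall 0 R, f t ∂μ :=
        (Measure.measurePreserving_sub_left μ x).setLIntegral_comp_preimage_emb
          (MeasurableEquiv.subLeft x).measurableEmbedding f _

lemma haarCell_eq_pi {d : ℕ} (n : ℤ) (k : Fin d → ℤ) :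
    haarCell n k = Set.pi univ fun i =>
      Ico ((2:ℝ) ^ (-n) * (k i - 1 / 2)) ((2:ℝ) ^ (-n) * (k i + 1 / 2)) := by
  ext x
  have h2n : (0:ℝ) < 2 ^ n := by positivity
  simp only [haarCell, haarIdx, mem_ofPred_eq, mem_pi, mem_univ, true_implies, mem_Ico,
    funext_iff, Int.floor_eq_iff, zpow_neg, inv_mul_le_iff₀ h2n, lt_inv_mul_iff₀ h2n]
  refine forall_congr' fun i => and_congr ?_ ?_ <;> constructor <;> intro h <;> linarith

lemma measurableSet_haarCell {d : ℕ} (n : ℤ) (k : Fin d → ℤ) :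
    MeasurableSet (haarCell n k) := by
  rw [haarCell_eq_pi]
  exact MeasurableSet.univ_pi fun _ => measurableSet_Ico

lemma volume_haarCell {d : ℕ} (n : ℤ) (k : Fin d → ℤ) :
    volume (haarCell n k) = (ENNReal.ofReal ((2:ℝ) ^ (n * (d:ℤ))))⁻¹ := by
  rw [haarCell_eq_pi, volume_pi_pi, ← ENNReal.ofReal_inv_of_pos (by positivity)]
  have hlen (a : ℝ) : (2:ℝ) ^ (-n) * (a + 1 / 2) - 2 ^ (-n) * (a - 1 / 2) = 2 ^ (-n) := by ring
  simp only [Real.volume_Ico, hlen, Finset.prod_const, Finset.card_univ, Fintype.card_fin]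
  rw [← ENNReal.ofReal_pow (by positivity)]
  congr 1
  rw [← zpow_natCast, ← zpow_mul, ← zpow_neg, neg_mul]

lemma haarCell_subset_closedBall {d : ℕ} (n : ℤ) (k : Fin d → ℤ) :
    haarCell n k ⊆ Metric.closedBall (lamOf n k) ((2:ℝ) ^ (-n) / 2) := by
  intro x hx
  rw [haarCell_eq_pi] at hx
  rw [Metric.mem_closedBall, dist_pi_le_iff (by positivity)]
  intro i
  obtain ⟨hlo, hhi⟩ := hx i (mem_univ i)
  rw [Real.dist_eq, abs_le, lamOf]
  constructor <;> linarith

lemma abs_dist_sub_dist_lamOf_le {d : ℕ} {n : ℤ} {k k' : Fin d → ℤ} {x y : Fin d → ℝ}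
    (hx : x ∈ haarCell n k) (hy : y ∈ haarCell n k') :
    |dist x y - dist (lamOf n k) (lamOf n k')| ≤ (2:ℝ) ^ (-n) := by
  have hxk := haarCell_subset_closedBall n k hx
  have hyk := haarCell_subset_closedBall n k' hy
  rw [Metric.mem_closedBall] at hxk hyk
  rw [← Real.dist_eq]
  linarith [dist_dist_dist_le x y (lamOf n k) (lamOf n k')]

lemma enorm_haarPhi_mul_mul_haarPhi {d : ℕ} (K : (Fin d → ℝ) → (Fin d → ℝ) → ℂ) (n : ℤ)
    (k k' : Fin d → ℤ) (x y : Fin d → ℝ) :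
    ‖(haarPhi n k x : ℂ) * K x y * (haarPhi n k' y : ℂ)‖ₑ =
      (haarCell n k).indicator (fun x => (haarCell n k').indicator
        (fun y => ENNReal.ofReal ((2:ℝ) ^ (n * (d:ℤ))) * ‖K x y‖ₑ) y) x := by
  have hsq : (2:ℝ) ^ ((n * d : ℝ) / 2) * 2 ^ ((n * d : ℝ) / 2) = 2 ^ (n * (d:ℤ)) := by
    rw [← Real.rpow_add two_pos, add_halves, ← Real.rpow_intCast]
    push_cast
    rfl
  by_cases hx : haarIdx n x = k <;> by_cases hy : haarIdx n y = k' <;>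
    simp only [haarPhi, haarCell, indicator, mem_ofPred_eq, hx, hy, if_true, if_false,
      Complex.ofReal_zero, zero_mul, mul_zero, enorm_zero]
  rw [mul_right_comm, ← Complex.ofReal_mul, hsq, enorm_mul, ← ofReal_norm, Complex.norm_real,
    Real.norm_of_nonneg (by positivity)]

lemma enorm_aMat_le {d : ℕ} (K : (Fin d → ℝ) → (Fin d → ℝ) → ℂ) (n : ℤ) (k k' : Fin d → ℤ)
    {B : ℝ≥0∞} (hB : ∀ x ∈ haarCell n k, ∫⁻ y in haarCell n k', ‖K x y‖ₑ ≤ B) :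
    ‖aMat K n k k'‖ₑ ≤ ENNReal.ofReal ((2:ℝ) ^ (n * (d:ℤ))) * B := by
  set s := ENNReal.ofReal ((2:ℝ) ^ (n * (d:ℤ)))
  have hs : s ≠ 0 := (ENNReal.ofReal_pos.2 (by positivity)).ne'
  have hinner (x : Fin d → ℝ) :
      ∫⁻ y, ‖(haarPhi n k x : ℂ) * K x y * (haarPhi n k' y : ℂ)‖ₑ =
        (haarCell n k).indicator (fun x => s * ∫⁻ y in haarCell n k', ‖K x y‖ₑ) x := by
    simp_rw [enorm_haarPhi_mul_mul_haarPhi]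
    by_cases hx : x ∈ haarCell n k
    · simp only [indicator_of_mem hx]
      rw [lintegral_indicator (measurableSet_haarCell n k'),
        lintegral_const_mul' _ _ ofReal_ne_top]
    · simp [indicator_of_notMem hx]
  have hdouble :
      ‖∫ x, ∫ y, (haarPhi n k x : ℂ) * K x y * (haarPhi n k' y : ℂ)‖ₑ ≤ B := calc
    _ ≤ ∫⁻ x, ∫⁻ y, ‖(haarPhi n k x : ℂ) * K x y * (haarPhi n k' y : ℂ)‖ₑ :=
      (enorm_integral_le_lintegral_enorm _).trans
        (lintegral_mono fun _ => enorm_integral_le_lintegral_enorm _)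
    _ = ∫⁻ x in haarCell n k, s * ∫⁻ y in haarCell n k', ‖K x y‖ₑ := by
      simp_rw [hinner]
      exact lintegral_indicator (measurableSet_haarCell n k) _
    _ ≤ ∫⁻ _ in haarCell n k, s * B :=
      setLIntegral_mono measurable_const fun x hx => by gcongr; exact hB x hx
    _ = B := by
      rw [setLIntegral_const, volume_haarCell, mul_right_comm,
        ENNReal.mul_inv_cancel hs ofReal_ne_top, one_mul]
  rw [aMat, enorm_smul, Real.enorm_of_nonneg (by positivity)]
  gcongr

theorem matrix_offdiagonal_decay_general {d : ℕ}
    (K : (Fin d → ℝ) → (Fin d → ℝ) → ℂ) (n : ℤ) (k k' : Fin d → ℤ) :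
    (‖lamOf n k - lamOf n k'‖ ≤ (2:ℝ) ^ (-n + 1) →
      (‖aMat K n k k'‖₊ : ℝ≥0∞) ≤
        ENNReal.ofReal ((2:ℝ) ^ (n * (d:ℤ))) *
          ∫⁻ t in {t : Fin d → ℝ | ‖t‖ ≤ 3 * (2:ℝ) ^ (-n)}, rK K t) ∧
    ((2:ℝ) ^ (-n + 1) < ‖lamOf n k - lamOf n k'‖ →
      (‖aMat K n k k'‖₊ : ℝ≥0∞) ≤ rK K ((1/2 : ℝ) • (lamOf n k - lamOf n k'))) := by
  rw [zpow_add_one₀ two_ne_zero, ← enorm_eq_nnnorm, ← dist_eq_norm]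
  constructor
  · intro hnear
    refine enorm_aMat_le K n k k' fun x hx => ?_
    have hball : haarCell n k' ⊆ Metric.closedBall x (3 * 2 ^ (-n)) := fun y hy => by
      rw [Metric.mem_closedBall, dist_comm]
      linarith [abs_le.1 (abs_dist_sub_dist_lamOf_le hx hy)]
    calc ∫⁻ y in haarCell n k', ‖K x y‖ₑ ≤ ∫⁻ y in haarCell n k', rK K (x - y) :=
          lintegral_mono fun y => enorm_le_rK K le_rfl
      _ ≤ ∫⁻ t in Metric.closedBall 0 (3 * 2 ^ (-n)), rK K t :=
          setLIntegral_comp_sub_le_of_subset_closedBall volume _ hball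
      _ = ∫⁻ t in {t : Fin d → ℝ | ‖t‖ ≤ 3 * (2:ℝ) ^ (-n)}, rK K t := by
          simp only [Metric.closedBall, dist_zero_right]
  · intro hfar
    set s := ENNReal.ofReal ((2:ℝ) ^ (n * (d:ℤ)))
    have hs : s ≠ 0 := (ENNReal.ofReal_pos.2 (by positivity)).ne'
    set M := rK K ((1/2 : ℝ) • (lamOf n k - lamOf n k'))
    have hK_le (x y) (hx : x ∈ haarCell n k) (hy : y ∈ haarCell n k') : ‖K x y‖ₑ ≤ M := by
      refine enorm_le_rK K ?_
      rw [norm_smul, Real.norm_of_nonneg (by norm_num), ← dist_eq_norm, ← dist_eq_norm]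
      linarith [abs_le.1 (abs_dist_sub_dist_lamOf_le hx hy)]
    calc ‖aMat K n k k'‖ₑ ≤ s * (M * s⁻¹) := enorm_aMat_le K n k k' fun x hx => by
          rw [← volume_haarCell n k', ← setLIntegral_const]
          exact setLIntegral_mono measurable_const (hK_le x · hx)
      _ = M := by rw [mul_comm M, ← mul_assoc, ENNReal.mul_inv_cancel hs ofReal_ne_top, one_mul]

/-- Proposition 2.7: off-diagonal decay of the discretization matrices.
Here `λ = 2^{-n}k`, `λ' = 2^{-n}k'`. -/
theorem matrix_offdiagonal_decay {d : ℕ}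
    (K : (Fin d → ℝ) → (Fin d → ℝ) → ℂ) (hKm : Measurable (Function.uncurry K))
    (hK : (∫⁻ x, rK K x) < ⊤) (n : ℤ) (k k' : Fin d → ℤ) :
    (‖lamOf n k - lamOf n k'‖ ≤ (2:ℝ) ^ (-n + 1) →
      (‖aMat K n k k'‖₊ : ℝ≥0∞) ≤
        ENNReal.ofReal ((2:ℝ) ^ (n * (d:ℤ))) *
          ∫⁻ t in {t : Fin d → ℝ | ‖t‖ ≤ 3 * (2:ℝ) ^ (-n)}, rK K t) ∧
    ((2:ℝ) ^ (-n + 1) < ‖lamOf n k - lamOf n k'‖ →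
      (‖aMat K n k k'‖₊ : ℝ≥0∞) ≤ rK K ((1/2 : ℝ) • (lamOf n k - lamOf n k'))) :=
  matrix_offdiagonal_decay_general K n k k'
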